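/- Suppose f : ℝⁿ × ℝᵐ → ℝ is ℓ-smooth and μ-strongly concave in y with μ > 0, and let P(x) = max_y f(x,y), y*(x) = argmax_y f(x,y). Then P is differentiable with ∇P(x) = ∇ₓf(x, y*(x)), and ∇P is Lipschitz continuous with constant (κ+1)ℓ where κ = ℓ/μ. -/

import Mathlib

open scoped RealInnerProductSpace Topology

/-!
Strong concavity makes `-∇_y f(x, ·)` strongly monotone; comparing the optimality conditions
`∇_y f(x, y*(x)) = 0 = ∇_y f(x', y*(x'))` then shows that `y*` is `κ`-Lipschitz. Since
`P(x') ≥ f(x', y*(x))` and `P(x) ≥ f(x, y*(x'))`, the increment `P(x') - P(x)` is squeezed between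
first-order expansions of `f(·, y*(x))` and `f(·, y*(x'))`, whose `x`-gradients at `x` differ by
at most `ℓκ‖x' - x‖`; so `P` has gradient `∇ₓ f(x, y*(x))` up to a quadratic error (a quantitative
Danskin theorem). The Lipschitz bound is `ℓ‖(x, y*(x)) - (x', y*(x'))‖ ≤ ℓ(1 + κ)‖x - x'‖`.
-/

lemma ConcaveOn.le_add_of_hasFDerivAt {E : Type*} [NormedAddCommGroup E] [NormedSpace ℝ E]
    {g : E → ℝ} {g' : E →L[ℝ] ℝ} {y : E} (hg : ConcaveOn ℝ Set.univ g)
    (hg' : HasFDerivAt g g' y) (y' : E) : g y' ≤ g y + g' (y' - y) := by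
  set line : ℝ →ᵃ[ℝ] E := AffineMap.lineMap y y'
  have hline : HasDerivAt (g ∘ line) (g' (y' - y)) 0 :=
    hg'.comp_hasDerivAt_of_eq 0 AffineMap.hasDerivAt_lineMap (by simp [line])
  have := (hg.comp_affineMap line).slope_le_of_hasDerivAt
    (Set.mem_univ 0) (Set.mem_univ 1) zero_lt_one hline
  simp only [slope_def_field, Function.comp_apply, line, AffineMap.lineMap_apply_one,
    AffineMap.lineMap_apply_zero, sub_zero, div_one] at this
  linarith

section InnerProductSpace

variable {H : Type*} [NormedAddCommGroup H] [InnerProductSpace ℝ H] [CompleteSpace H]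

lemma abs_sub_sub_inner_le_of_lipschitz_gradient {f : H → ℝ} {g : H → H} {L : ℝ} (hL : 0 ≤ L)
    (hg : ∀ z, HasGradientAt f (g z) z) (hlip : ∀ z z', ‖g z - g z'‖ ≤ L * ‖z - z'‖)
    (z z' : H) : |f z' - f z - ⟪g z, z' - z⟫| ≤ L * ‖z' - z‖ ^ 2 := by
  have hbound : ∀ w ∈ Metric.closedBall z ‖z' - z‖,
      ‖InnerProductSpace.toDual ℝ H (g w) - InnerProductSpace.toDual ℝ H (g z)‖ ≤
        L * ‖z' - z‖ := fun w hw => by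
    rw [← map_sub, LinearIsometryEquiv.norm_map]
    exact (hlip w z).trans (mul_le_mul_of_nonneg_left (mem_closedBall_iff_norm.1 hw) hL)
  have := (convex_closedBall z ‖z' - z‖).norm_image_sub_le_of_norm_hasFDerivWithin_le'
    (fun w _ => (hg w).hasFDerivAt.hasFDerivWithinAt) hbound
    (Metric.mem_closedBall_self (norm_nonneg _)) (mem_closedBall_iff_norm.2 le_rfl)
  rw [InnerProductSpace.toDual_apply_apply, Real.norm_eq_abs] at this
  linarith

lemma StrongConcaveOn.add_le_add_inner_of_hasGradientAt {g : H → ℝ} {G y : H} {μ : ℝ}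
    (hg : StrongConcaveOn Set.univ μ g) (hG : HasGradientAt g G y) (y' : H) :
    g y' + μ / 2 * ‖y' - y‖ ^ 2 ≤ g y + ⟪G, y' - y⟫ := by
  have hderiv := hG.hasFDerivAt.add ((hasStrictFDerivAt_norm_sq y).hasFDerivAt.const_mul (μ / 2))
  have := (strongConcaveOn_iff_convex.1 hg).le_add_of_hasFDerivAt hderiv y'
  simp only [add_apply, InnerProductSpace.toDual_apply_apply, smul_apply,
    coe_innerSL_apply, nsmul_eq_mul, Nat.cast_ofNat, smul_eq_mul] at this
  have hsq : ‖y' - y‖ ^ 2 = ‖y'‖ ^ 2 - ‖y‖ ^ 2 - 2 * ⟪y, y' - y⟫ := by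
    rw [norm_sub_sq_real, inner_sub_right, real_inner_self_eq_norm_sq, real_inner_comm]; ring
  rw [hsq]; linarith

lemma StrongConcaveOn.mul_norm_sub_sq_le_inner {g : H → ℝ} {G G' y y' : H} {μ : ℝ}
    (hg : StrongConcaveOn Set.univ μ g) (hG : HasGradientAt g G y) (hG' : HasGradientAt g G' y') :
    μ * ‖y - y'‖ ^ 2 ≤ ⟪G' - G, y - y'⟫ := by
  have h₁ := hg.add_le_add_inner_of_hasGradientAt hG y'
  have h₂ := hg.add_le_add_inner_of_hasGradientAt hG' y
  rw [norm_sub_rev] at h₁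
  rw [inner_sub_left, ← neg_sub y y', inner_neg_right] at *
  linarith

lemma hasGradientAt_of_abs_sub_sub_inner_le {ψ : H → ℝ} {g x : H} {C : ℝ}
    (h : ∀ x', |ψ x' - ψ x - ⟪g, x' - x⟫| ≤ C * ‖x' - x‖ ^ 2) : HasGradientAt ψ g x := by
  rw [hasGradientAt_iff_isLittleO]
  have hsq : (fun x' => ‖x' - x‖ ^ 2) =o[𝓝 x] fun x' => x' - x :=
    (Asymptotics.isLittleO_norm_pow_id one_lt_two).comp_tendsto
      (tendsto_sub_nhds_zero_iff.2 Filter.tendsto_id)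
  refine (Asymptotics.IsBigO.of_bound C (Filter.Eventually.of_forall fun x' => ?_)).trans_isLittleO
    hsq
  rw [Real.norm_eq_abs, norm_pow, norm_norm]
  exact h x'

end InnerProductSpace

lemma mul_norm_sub_le_of_isMaxOn_strongConcaveOn {X H : Type*} [PseudoMetricSpace X]
    [NormedAddCommGroup H] [InnerProductSpace ℝ H] [CompleteSpace H] {μ L : ℝ}
    {φ : X → H → ℝ} {G : X → H → H} {ystar : X → H}
    (hG : ∀ x y, HasGradientAt (φ x) (G x y) y) (hconc : ∀ x, StrongConcaveOn Set.univ μ (φ x))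
    (hGlip : ∀ x x' y, ‖G x y - G x' y‖ ≤ L * dist x x')
    (hmax : ∀ x, IsMaxOn (φ x) Set.univ (ystar x)) (x x' : X) :
    μ * ‖ystar x - ystar x'‖ ≤ L * dist x x' := by
  have hcrit : ∀ x, G x (ystar x) = 0 := fun x =>
    (InnerProductSpace.toDual ℝ H).map_eq_zero_iff.1
      (((hmax x).isLocalMax Filter.univ_mem).hasFDerivAt_eq_zero (hG x (ystar x)).hasFDerivAt)
  have hmono := (hconc x).mul_norm_sub_sq_le_inner (hG x (ystar x)) (hG x (ystar x'))
  rw [hcrit x, sub_zero, ← sub_zero (G x (ystar x')), ← hcrit x'] at hmono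
  set d := ‖ystar x - ystar x'‖
  have hCS : μ * d ^ 2 ≤ L * dist x x' * d :=
    hmono.trans ((real_inner_le_norm _ _).trans
      (mul_le_mul_of_nonneg_right (hGlip x x' _) (norm_nonneg _)))
  rcases (norm_nonneg _ : 0 ≤ d).eq_or_lt with hd | hd
  · simp only [d, ← hd, mul_zero]
    exact (norm_nonneg _).trans (hGlip x x' (ystar x))
  · exact le_of_mul_le_mul_right (by linarith) hd

lemma hasGradientAt_comp_of_isMaxOn {X Y : Type*} [NormedAddCommGroup X] [InnerProductSpace ℝ X]
    [CompleteSpace X] [PseudoMetricSpace Y] {C K κ : ℝ}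
    {φ : X → Y → ℝ} {g : X → Y → X} {ystar : X → Y}
    (hmax : ∀ x, IsMaxOn (φ x) Set.univ (ystar x))
    (hquad : ∀ x x' y, |φ x' y - φ x y - ⟪g x y, x' - x⟫| ≤ C * ‖x' - x‖ ^ 2)
    (hK : 0 ≤ K) (hg : ∀ x y y', ‖g x y - g x y'‖ ≤ K * dist y y')
    (hy : ∀ x x', dist (ystar x) (ystar x') ≤ κ * ‖x - x'‖) (x : X) :
    HasGradientAt (fun x => φ x (ystar x)) (g x (ystar x)) x := by
  refine hasGradientAt_of_abs_sub_sub_inner_le (C := C + K * κ) fun x' => abs_le.2 ⟨?_, ?_⟩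
  · have hval : φ x' (ystar x) ≤ φ x' (ystar x') := hmax x' (Set.mem_univ _)
    have hexpand := (abs_le.1 (hquad x x' (ystar x))).1
    have hκ : 0 ≤ κ * ‖x' - x‖ := dist_nonneg.trans (hy x' x)
    have hslack : 0 ≤ K * κ * ‖x' - x‖ ^ 2 := by
      rw [mul_assoc, pow_two, ← mul_assoc κ]
      positivity
    linarith
  · have hval : φ x (ystar x') ≤ φ x (ystar x) := hmax x (Set.mem_univ _)
    have hexpand := (abs_le.1 (hquad x x' (ystar x'))).2
    have hcross : ⟪g x (ystar x') - g x (ystar x), x' - x⟫ ≤ K * κ * ‖x' - x‖ ^ 2 :=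
      calc ⟪g x (ystar x') - g x (ystar x), x' - x⟫
          ≤ ‖g x (ystar x') - g x (ystar x)‖ * ‖x' - x‖ := real_inner_le_norm _ _
        _ ≤ K * (κ * ‖x' - x‖) * ‖x' - x‖ := by
          gcongr
          exact (hg x _ _).trans (mul_le_mul_of_nonneg_left (hy x' x) hK)
        _ = K * κ * ‖x' - x‖ ^ 2 := by ring
    rw [inner_sub_left] at hcross
    linarith

lemma WithLp.norm_toLp_le_add {p : ENNReal} [Fact (1 ≤ p)] {α β : Type*}
    [SeminormedAddCommGroup α] [SeminormedAddCommGroup β] (a : α) (b : β) :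
    ‖WithLp.toLp p (a, b)‖ ≤ ‖a‖ + ‖b‖ :=
  calc ‖WithLp.toLp p (a, b)‖ = ‖WithLp.toLp p (a, (0 : β)) + WithLp.toLp p ((0 : α), b)‖ := by
        rw [← WithLp.toLp_add, Prod.mk_add_mk, add_zero, zero_add]
    _ ≤ ‖a‖ + ‖b‖ := by
        simpa only [WithLp.norm_toLp_fst, WithLp.norm_toLp_snd] using
          norm_add_le (WithLp.toLp p (a, (0 : β))) (WithLp.toLp p ((0 : α), b))

section ProdL2

variable {E F : Type*} [NormedAddCommGroup E] [InnerProductSpace ℝ E] [CompleteSpace E]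
  [NormedAddCommGroup F] [InnerProductSpace ℝ F] [CompleteSpace F]

lemma HasGradientAt.comp_toLp_left {f : WithLp 2 (E × F) → ℝ} {g : WithLp 2 (E × F)} {x : E}
    {y : F} (h : HasGradientAt f g (WithLp.toLp 2 (x, y))) :
    HasGradientAt (fun x => f (WithLp.toLp 2 (x, y))) g.fst x := by
  set L := (WithLp.prodContinuousLinearEquiv 2 ℝ E F).symm.toContinuousLinearMap.comp
    (ContinuousLinearMap.inl ℝ E F)
  have hL : HasFDerivAt (fun x : E => WithLp.toLp 2 (x, y)) L x :=
    (WithLp.prodContinuousLinearEquiv 2 ℝ E F).symm.hasFDerivAt.comp x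
      ((hasFDerivAt_id x).prodMk (hasFDerivAt_const y x))
  have hD : (InnerProductSpace.toDual ℝ _ g).comp L = InnerProductSpace.toDual ℝ E g.fst := by
    ext v
    simp [L]
  rw [hasGradientAt_iff_hasFDerivAt, ← hD]
  exact h.hasFDerivAt.comp x hL

lemma HasGradientAt.comp_toLp_right {f : WithLp 2 (E × F) → ℝ} {g : WithLp 2 (E × F)} {x : E}
    {y : F} (h : HasGradientAt f g (WithLp.toLp 2 (x, y))) :
    HasGradientAt (fun y => f (WithLp.toLp 2 (x, y))) g.snd y := by
  set L := (WithLp.prodContinuousLinearEquiv 2 ℝ E F).symm.toContinuousLinearMap.comp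
    (ContinuousLinearMap.inr ℝ E F)
  have hL : HasFDerivAt (fun y : F => WithLp.toLp 2 (x, y)) L y :=
    (WithLp.prodContinuousLinearEquiv 2 ℝ E F).symm.hasFDerivAt.comp y
      ((hasFDerivAt_const x y).prodMk (hasFDerivAt_id y))
  have hD : (InnerProductSpace.toDual ℝ _ g).comp L = InnerProductSpace.toDual ℝ F g.snd := by
    ext v
    simp [L]
  rw [hasGradientAt_iff_hasFDerivAt, ← hD]
  exact h.hasFDerivAt.comp y hL

variable {f : WithLp 2 (E × F) → ℝ} {ℓ μ : ℝ} {ystar : E → F}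

lemma norm_gradient_toLp_sub_le (hℓ : 0 ≤ ℓ)
    (hlip : ∀ z z', ‖gradient f z - gradient f z'‖ ≤ ℓ * ‖z - z'‖) (x x' : E) (y y' : F) :
    ‖gradient f (WithLp.toLp 2 (x, y)) - gradient f (WithLp.toLp 2 (x', y'))‖ ≤
      ℓ * (‖x - x'‖ + ‖y - y'‖) := by
  refine (hlip _ _).trans (mul_le_mul_of_nonneg_left ?_ hℓ)
  rw [← WithLp.toLp_sub, Prod.mk_sub_mk]
  exact WithLp.norm_toLp_le_add _ _

lemma norm_sub_le_div_mul_of_isMaxOn (hμ : 0 < μ) (hℓ : 0 ≤ ℓ)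
    (hdf : ∀ z, DifferentiableAt ℝ f z)
    (hlip : ∀ z z', ‖gradient f z - gradient f z'‖ ≤ ℓ * ‖z - z'‖)
    (hconc : ∀ x, StrongConcaveOn Set.univ μ (fun y => f (WithLp.toLp 2 (x, y))))
    (hstar : ∀ x, IsMaxOn (fun y => f (WithLp.toLp 2 (x, y))) Set.univ (ystar x)) (x x' : E) :
    ‖ystar x - ystar x'‖ ≤ ℓ / μ * ‖x - x'‖ := by
  have hGlip (x x' : E) (y : F) : ‖(gradient f (WithLp.toLp 2 (x, y))).snd -
      (gradient f (WithLp.toLp 2 (x', y))).snd‖ ≤ ℓ * dist x x' := by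
    rw [← WithLp.sub_snd, dist_eq_norm]
    simpa using (WithLp.norm_snd_le E _).trans (norm_gradient_toLp_sub_le hℓ hlip x x' y y)
  have := mul_norm_sub_le_of_isMaxOn_strongConcaveOn
    (fun x y => (hdf _).hasGradientAt.comp_toLp_right) hconc hGlip hstar x x'
  rw [dist_eq_norm] at this
  rw [div_mul_eq_mul_div, le_div_iff₀ hμ]
  linarith

lemma hasGradientAt_comp_argmax (hμ : 0 < μ) (hℓ : 0 ≤ ℓ)
    (hdf : ∀ z, DifferentiableAt ℝ f z)
    (hlip : ∀ z z', ‖gradient f z - gradient f z'‖ ≤ ℓ * ‖z - z'‖)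
    (hconc : ∀ x, StrongConcaveOn Set.univ μ (fun y => f (WithLp.toLp 2 (x, y))))
    (hstar : ∀ x, IsMaxOn (fun y => f (WithLp.toLp 2 (x, y))) Set.univ (ystar x)) (x : E) :
    HasGradientAt (fun x => f (WithLp.toLp 2 (x, ystar x)))
      (gradient f (WithLp.toLp 2 (x, ystar x))).fst x := by
  have hfst (x x' : E) (y y' : F) : ‖(gradient f (WithLp.toLp 2 (x, y))).fst -
      (gradient f (WithLp.toLp 2 (x', y'))).fst‖ ≤ ℓ * (‖x - x'‖ + ‖y - y'‖) := by
    rw [← WithLp.sub_fst]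
    exact (WithLp.norm_fst_le E _).trans (norm_gradient_toLp_sub_le hℓ hlip x x' y y')
  refine hasGradientAt_comp_of_isMaxOn (C := ℓ) (K := ℓ) (κ := ℓ / μ)
    (g := fun x y => (gradient f (WithLp.toLp 2 (x, y))).fst) hstar
    (fun x x' y => ?_) hℓ (fun x y y' => ?_) (fun x x' => ?_) x
  · refine abs_sub_sub_inner_le_of_lipschitz_gradient hℓ
      (fun x => (hdf _).hasGradientAt.comp_toLp_left) (fun x x' => ?_) x x'
    simpa using hfst x x' y y
  · simpa [dist_eq_norm] using hfst x x y y'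
  · rw [dist_eq_norm]
    exact norm_sub_le_div_mul_of_isMaxOn hμ hℓ hdf hlip hconc hstar x x'

lemma norm_fst_gradient_argmax_sub_le (hμ : 0 < μ) (hℓ : 0 ≤ ℓ)
    (hdf : ∀ z, DifferentiableAt ℝ f z)
    (hlip : ∀ z z', ‖gradient f z - gradient f z'‖ ≤ ℓ * ‖z - z'‖)
    (hconc : ∀ x, StrongConcaveOn Set.univ μ (fun y => f (WithLp.toLp 2 (x, y))))
    (hstar : ∀ x, IsMaxOn (fun y => f (WithLp.toLp 2 (x, y))) Set.univ (ystar x)) (x x' : E) :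
    ‖(gradient f (WithLp.toLp 2 (x, ystar x))).fst -
      (gradient f (WithLp.toLp 2 (x', ystar x'))).fst‖ ≤ (ℓ / μ + 1) * ℓ * ‖x - x'‖ := by
  have hy := norm_sub_le_div_mul_of_isMaxOn hμ hℓ hdf hlip hconc hstar x x'
  calc _ ≤ ‖gradient f (WithLp.toLp 2 (x, ystar x)) -
          gradient f (WithLp.toLp 2 (x', ystar x'))‖ := by
        rw [← WithLp.sub_fst]; exact WithLp.norm_fst_le E _
    _ ≤ ℓ * (‖x - x'‖ + ‖ystar x - ystar x'‖) := norm_gradient_toLp_sub_le hℓ hlip _ _ _ _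
    _ ≤ ℓ * (‖x - x'‖ + ℓ / μ * ‖x - x'‖) := by gcongr
    _ = (ℓ / μ + 1) * ℓ * ‖x - x'‖ := by ring

end ProdL2

/-- For `ℓ`-smooth `f`, `μ`-strongly concave in `y`, with `P(x) = max_y f(x,y)` and
`y*(x)` the maximizer, `P` is differentiable with `∇P(x) = ∇ₓ f(x, y*(x))`, and `∇P` is
`(κ+1)ℓ`-Lipschitz, `κ = ℓ/μ`. -/
theorem stmt3 {n m : ℕ} (ℓ μ : ℝ) (hμ : 0 < μ) (hℓ : μ ≤ ℓ)
    (f : WithLp 2 (EuclideanSpace ℝ (Fin n) × EuclideanSpace ℝ (Fin m)) → ℝ)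
    (hdiff : ContDiff ℝ 2 f)
    (hlip : ∀ z z', ‖gradient f z - gradient f z'‖ ≤ ℓ * ‖z - z'‖)
    (hconc : ∀ x, StrongConcaveOn Set.univ μ
      (fun y => f ((WithLp.equiv 2 (EuclideanSpace ℝ (Fin n) × EuclideanSpace ℝ (Fin m))).symm (x, y))))
    (P : EuclideanSpace ℝ (Fin n) → ℝ)
    (hP : ∀ x, P x = ⨆ y, f ((WithLp.equiv 2 (EuclideanSpace ℝ (Fin n) × EuclideanSpace ℝ (Fin m))).symm (x, y)))
    (ystar : EuclideanSpace ℝ (Fin n) → EuclideanSpace ℝ (Fin m))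
    (hstar : ∀ x, IsMaxOn
      (fun y => f ((WithLp.equiv 2 (EuclideanSpace ℝ (Fin n) × EuclideanSpace ℝ (Fin m))).symm (x, y)))
      Set.univ (ystar x)) :
    (∀ x, HasGradientAt P
      ((WithLp.equiv 2 (EuclideanSpace ℝ (Fin n) × EuclideanSpace ℝ (Fin m)))
        (gradient f ((WithLp.equiv 2 (EuclideanSpace ℝ (Fin n) × EuclideanSpace ℝ (Fin m))).symm
          (x, ystar x)))).1 x) ∧
    ∀ x x',
      ‖((WithLp.equiv 2 (EuclideanSpace ℝ (Fin n) × EuclideanSpace ℝ (Fin m)))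
          (gradient f ((WithLp.equiv 2 (EuclideanSpace ℝ (Fin n) × EuclideanSpace ℝ (Fin m))).symm
            (x, ystar x)))).1 -
        ((WithLp.equiv 2 (EuclideanSpace ℝ (Fin n) × EuclideanSpace ℝ (Fin m)))
          (gradient f ((WithLp.equiv 2 (EuclideanSpace ℝ (Fin n) × EuclideanSpace ℝ (Fin m))).symm
            (x', ystar x')))).1‖ ≤ (ℓ / μ + 1) * ℓ * ‖x - x'‖ := by
  have hdf : ∀ z, DifferentiableAt ℝ f z := hdiff.differentiable (by norm_num)
  have hℓ₀ : 0 ≤ ℓ := hμ.le.trans hℓ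
  have hPmax : P = fun x => f (WithLp.toLp 2 (x, ystar x)) := funext fun x =>
    (hP x).trans (ciSup_eq_of_forall_le_of_forall_lt_exists_gt (fun y => hstar x (Set.mem_univ y))
      fun _ hw => ⟨ystar x, hw⟩)
  subst hPmax
  exact ⟨hasGradientAt_comp_argmax hμ hℓ₀ hdf hlip hconc hstar,
    norm_fst_gradient_argmax_sub_le hμ hℓ₀ hdf hlip hconc hstar⟩
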